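/- Let F(x,y,z,u,v) = x^{12} + y^{12} + z^6 + u^6 + v^2 + a·xyzuv + b·x^6 y^6 with parameters a, b ∈ ℂ (the two-parameter family of Calabi–Yau threefolds in the weighted projective space P(1,1,2,2,6)). There exists a point (x,y,z,u,v) ∈ ℂ^5, not equal to (0,0,0,0,0), at which all five partial derivatives of F vanish, if and only if (b − 2)(b + 2)(a^6 − 1728b + 3456)(a^6 − 1728b − 3456) = 0. -/
import Mathlib


/- Statement 18: discriminant of the two-parameter family of Calabi–Yau
threefolds in P(1,1,2,2,6):
F = x^12 + y^12 + z^6 + u^6 + v^2 + a·xyzuv + b·x^6 y^6. -/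

noncomputable def F11226 (a b : ℂ) (p : Fin 5 → ℂ) : ℂ :=
  p 0 ^ 12 + p 1 ^ 12 + p 2 ^ 6 + p 3 ^ 6 + p 4 ^ 2 +
    a * (p 0 * p 1 * p 2 * p 3 * p 4) + b * (p 0 ^ 6 * p 1 ^ 6)

lemma deriv0' (a b : ℂ) (p : Fin 5 → ℂ) :
    deriv (fun t : ℂ => F11226 a b (Function.update p 0 t)) (p 0)
      = 12 * p 0 ^ 11 + a * (p 1 * p 2 * p 3 * p 4) + 6 * b * (p 0 ^ 5 * p 1 ^ 6) := by
  have e0 : (fun t : ℂ => F11226 a b (Function.update p 0 t))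
      = fun t : ℂ => t ^ 12 + (p 1 ^ 12 + p 2 ^ 6 + p 3 ^ 6 + p 4 ^ 2)
        + (a * (p 1 * p 2 * p 3 * p 4)) * t + (b * p 1 ^ 6) * t ^ 6 := by
    funext t; simp [F11226, Function.update]; ring
  have h : HasDerivAt (fun t : ℂ => t ^ 12 + (p 1 ^ 12 + p 2 ^ 6 + p 3 ^ 6 + p 4 ^ 2)
        + (a * (p 1 * p 2 * p 3 * p 4)) * t + (b * p 1 ^ 6) * t ^ 6)
      ((12 : ℕ) * p 0 ^ 11 + (a * (p 1 * p 2 * p 3 * p 4)) * 1 + (b * p 1 ^ 6) * ((6:ℕ) * p 0 ^ 5)) (p 0) :=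
    (((hasDerivAt_pow 12 (p 0)).add_const _).add ((hasDerivAt_id (p 0)).const_mul _)).add
      ((hasDerivAt_pow 6 (p 0)).const_mul _)
  rw [e0, h.deriv]; push_cast; ring

lemma deriv1' (a b : ℂ) (p : Fin 5 → ℂ) :
    deriv (fun t : ℂ => F11226 a b (Function.update p 1 t)) (p 1)
      = 12 * p 1 ^ 11 + a * (p 0 * p 2 * p 3 * p 4) + 6 * b * (p 0 ^ 6 * p 1 ^ 5) := by
  have e0 : (fun t : ℂ => F11226 a b (Function.update p 1 t))
      = fun t : ℂ => t ^ 12 + (p 0 ^ 12 + p 2 ^ 6 + p 3 ^ 6 + p 4 ^ 2)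
        + (a * (p 0 * p 2 * p 3 * p 4)) * t + (b * p 0 ^ 6) * t ^ 6 := by
    funext t; simp [F11226, Function.update]; ring
  have h : HasDerivAt (fun t : ℂ => t ^ 12 + (p 0 ^ 12 + p 2 ^ 6 + p 3 ^ 6 + p 4 ^ 2)
        + (a * (p 0 * p 2 * p 3 * p 4)) * t + (b * p 0 ^ 6) * t ^ 6)
      ((12 : ℕ) * p 1 ^ 11 + (a * (p 0 * p 2 * p 3 * p 4)) * 1 + (b * p 0 ^ 6) * ((6:ℕ) * p 1 ^ 5)) (p 1) :=
    (((hasDerivAt_pow 12 (p 1)).add_const _).add ((hasDerivAt_id (p 1)).const_mul _)).add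
      ((hasDerivAt_pow 6 (p 1)).const_mul _)
  rw [e0, h.deriv]; push_cast; ring

lemma deriv2' (a b : ℂ) (p : Fin 5 → ℂ) :
    deriv (fun t : ℂ => F11226 a b (Function.update p 2 t)) (p 2)
      = 6 * p 2 ^ 5 + a * (p 0 * p 1 * p 3 * p 4) := by
  have e0 : (fun t : ℂ => F11226 a b (Function.update p 2 t))
      = fun t : ℂ => t ^ 6 + (p 0 ^ 12 + p 1 ^ 12 + p 3 ^ 6 + p 4 ^ 2 + b * (p 0 ^ 6 * p 1 ^ 6))
        + (a * (p 0 * p 1 * p 3 * p 4)) * t := by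
    funext t; simp [F11226, Function.update]; ring
  have h : HasDerivAt (fun t : ℂ => t ^ 6 + (p 0 ^ 12 + p 1 ^ 12 + p 3 ^ 6 + p 4 ^ 2 + b * (p 0 ^ 6 * p 1 ^ 6))
        + (a * (p 0 * p 1 * p 3 * p 4)) * t)
      ((6 : ℕ) * p 2 ^ 5 + (a * (p 0 * p 1 * p 3 * p 4)) * 1) (p 2) :=
    ((hasDerivAt_pow 6 (p 2)).add_const _).add ((hasDerivAt_id (p 2)).const_mul _)
  rw [e0, h.deriv]; push_cast; ring

lemma deriv3' (a b : ℂ) (p : Fin 5 → ℂ) :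
    deriv (fun t : ℂ => F11226 a b (Function.update p 3 t)) (p 3)
      = 6 * p 3 ^ 5 + a * (p 0 * p 1 * p 2 * p 4) := by
  have e0 : (fun t : ℂ => F11226 a b (Function.update p 3 t))
      = fun t : ℂ => t ^ 6 + (p 0 ^ 12 + p 1 ^ 12 + p 2 ^ 6 + p 4 ^ 2 + b * (p 0 ^ 6 * p 1 ^ 6))
        + (a * (p 0 * p 1 * p 2 * p 4)) * t := by
    funext t; simp [F11226, Function.update]; ring
  have h : HasDerivAt (fun t : ℂ => t ^ 6 + (p 0 ^ 12 + p 1 ^ 12 + p 2 ^ 6 + p 4 ^ 2 + b * (p 0 ^ 6 * p 1 ^ 6))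
        + (a * (p 0 * p 1 * p 2 * p 4)) * t)
      ((6 : ℕ) * p 3 ^ 5 + (a * (p 0 * p 1 * p 2 * p 4)) * 1) (p 3) :=
    ((hasDerivAt_pow 6 (p 3)).add_const _).add ((hasDerivAt_id (p 3)).const_mul _)
  rw [e0, h.deriv]; push_cast; ring

lemma deriv4' (a b : ℂ) (p : Fin 5 → ℂ) :
    deriv (fun t : ℂ => F11226 a b (Function.update p 4 t)) (p 4)
      = 2 * p 4 + a * (p 0 * p 1 * p 2 * p 3) := by
  have e0 : (fun t : ℂ => F11226 a b (Function.update p 4 t))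
      = fun t : ℂ => t ^ 2 + (p 0 ^ 12 + p 1 ^ 12 + p 2 ^ 6 + p 3 ^ 6 + b * (p 0 ^ 6 * p 1 ^ 6))
        + (a * (p 0 * p 1 * p 2 * p 3)) * t := by
    funext t; simp [F11226, Function.update]; ring
  have h : HasDerivAt (fun t : ℂ => t ^ 2 + (p 0 ^ 12 + p 1 ^ 12 + p 2 ^ 6 + p 3 ^ 6 + b * (p 0 ^ 6 * p 1 ^ 6))
        + (a * (p 0 * p 1 * p 2 * p 3)) * t)
      ((2 : ℕ) * p 4 ^ 1 + (a * (p 0 * p 1 * p 2 * p 3)) * 1) (p 4) :=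
    ((hasDerivAt_pow 2 (p 4)).add_const _).add ((hasDerivAt_id (p 4)).const_mul _)
  rw [e0, h.deriv]; push_cast; ring

lemma crit18 (a b : ℂ) (p : Fin 5 → ℂ)
    (g0 : 12 * p 0 ^ 11 + a * (p 1 * p 2 * p 3 * p 4) + 6 * b * (p 0 ^ 5 * p 1 ^ 6) = 0)
    (g1 : 12 * p 1 ^ 11 + a * (p 0 * p 2 * p 3 * p 4) + 6 * b * (p 0 ^ 6 * p 1 ^ 5) = 0)
    (g2 : 6 * p 2 ^ 5 + a * (p 0 * p 1 * p 3 * p 4) = 0)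
    (g3 : 6 * p 3 ^ 5 + a * (p 0 * p 1 * p 2 * p 4) = 0)
    (g4 : 2 * p 4 + a * (p 0 * p 1 * p 2 * p 3) = 0) :
    ∀ i : Fin 5, deriv (fun t : ℂ => F11226 a b (Function.update p i t)) (p i) = 0 := by
  intro i
  fin_cases i
  · show deriv (fun t : ℂ => F11226 a b (Function.update p 0 t)) (p 0) = 0
    rw [deriv0' a b p]; exact g0
  · show deriv (fun t : ℂ => F11226 a b (Function.update p 1 t)) (p 1) = 0
    rw [deriv1' a b p]; exact g1
  · show deriv (fun t : ℂ => F11226 a b (Function.update p 2 t)) (p 2) = 0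
    rw [deriv2' a b p]; exact g2
  · show deriv (fun t : ℂ => F11226 a b (Function.update p 3 t)) (p 3) = 0
    rw [deriv3' a b p]; exact g3
  · show deriv (fun t : ℂ => F11226 a b (Function.update p 4 t)) (p 4) = 0
    rw [deriv4' a b p]; exact g4

lemma key18 (a b x y z u v : ℂ)
    (h1 : 12*x^11 + a*(y*z*u*v) + 6*b*(x^5*y^6) = 0)
    (h2 : 12*y^11 + a*(x*z*u*v) + 6*b*(x^6*y^5) = 0)
    (h3 : 6*z^5 + a*(x*y*u*v) = 0)
    (h4 : 6*u^5 + a*(x*y*z*v) = 0)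
    (h5 : 2*v + a*(x*y*z*u) = 0)
    (hne : ¬(x = 0 ∧ y = 0 ∧ z = 0 ∧ u = 0 ∧ v = 0)) :
    (b - 2) * (b + 2) * (a ^ 6 - 1728 * b + 3456) * (a ^ 6 - 1728 * b - 3456) = 0 := by
  by_cases hx : x = 0
  · exfalso
    have hy : y = 0 := by
      have : y ^ 11 = 0 := by
        linear_combination (1/12)*h2 - (a*(z*u*v)/12 + (b/2)*(x^5*y^5))*hx
      exact pow_eq_zero_iff (by norm_num) |>.mp this
    have hz : z = 0 := by
      have : z ^ 5 = 0 := by linear_combination (1/6)*h3 - (a*(y*u*v)/6)*hx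
      exact pow_eq_zero_iff (by norm_num) |>.mp this
    have hu : u = 0 := by
      have : u ^ 5 = 0 := by linear_combination (1/6)*h4 - (a*(y*z*v)/6)*hx
      exact pow_eq_zero_iff (by norm_num) |>.mp this
    have hv : v = 0 := by linear_combination (1/2)*h5 - (a*(y*z*u)/2)*hx
    exact hne ⟨hx, hy, hz, hu, hv⟩
  by_cases hy : y = 0
  · exfalso
    apply hx
    have : x ^ 11 = 0 := by
      linear_combination (1/12)*h1 - (a*(z*u*v)/12 + (b/2)*(x^5*y^5))*hy
    exact pow_eq_zero_iff (by norm_num) |>.mp this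
  by_cases hz : z = 0
  · have hu0 : u = 0 := by
      have : u ^ 5 = 0 := by linear_combination (1/6)*h4 - (a*(x*y*v)/6)*hz
      exact pow_eq_zero_iff (by norm_num) |>.mp this
    have e1 : x^5 * (2*x^6 + b*y^6) = 0 := by
      linear_combination (1/6)*h1 - (a*(y*u*v)/6)*hz
    have e2 : y^5 * (2*y^6 + b*x^6) = 0 := by
      linear_combination (1/6)*h2 - (a*(x*u*v)/6)*hz
    have f1 := (mul_eq_zero.mp e1).resolve_left (pow_ne_zero 5 hx)
    have f2 := (mul_eq_zero.mp e2).resolve_left (pow_ne_zero 5 hy)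
    have t : x^6 * ((b-2)*(b+2)) = 0 := by linear_combination b*f2 - 2*f1
    have hb := (mul_eq_zero.mp t).resolve_left (pow_ne_zero 6 hx)
    linear_combination ((a^6-1728*b+3456)*(a^6-1728*b-3456))*hb
  have hu : u ≠ 0 := by
    intro h
    apply hz
    have : z ^ 5 = 0 := by linear_combination (1/6)*h3 - (a*(x*y*v)/6)*h
    exact pow_eq_zero_iff (by norm_num) |>.mp this
  have t3 : z * (12*z^4 - a^2*(x^2*y^2*u^2)) = 0 := by
    linear_combination 2*h3 - (a*(x*y*u))*h5
  have ez := (mul_eq_zero.mp t3).resolve_left hz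
  have t4 : u * (12*u^4 - a^2*(x^2*y^2*z^2)) = 0 := by
    linear_combination 2*h4 - (a*(x*y*z))*h5
  have eu := (mul_eq_zero.mp t4).resolve_left hu
  have tzu : (z*u)^2 * (144*z^2*u^2 - a^4*(x^4*y^4)) = 0 := by
    linear_combination (12*u^4)*ez + (a^2*x^2*y^2*u^2)*eu
  have ezu := (mul_eq_zero.mp tzu).resolve_left (pow_ne_zero 2 (mul_ne_zero hz hu))
  have t1 : x^5 * (3456*x^6 + (1728*b - a^6)*y^6) = 0 := by
    linear_combination 288*h1 - 144*(a*(y*z*u))*h5 + (a^2*x*y^2)*ezu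
  have e1 := (mul_eq_zero.mp t1).resolve_left (pow_ne_zero 5 hx)
  have t2 : y^5 * (3456*y^6 + (1728*b - a^6)*x^6) = 0 := by
    linear_combination 288*h2 - 144*(a*(x*z*u))*h5 + (a^2*x^2*y)*ezu
  have e2 := (mul_eq_zero.mp t2).resolve_left (pow_ne_zero 5 hy)
  have tK : (x^6*y^6) * ((a^6-1728*b+3456)*(a^6-1728*b-3456)) = 0 := by
    linear_combination (-(a^6-1728*b)*x^6)*e1 - (3456*x^6)*e2
  have hK := (mul_eq_zero.mp tK).resolve_left
    (mul_ne_zero (pow_ne_zero 6 hx) (pow_ne_zero 6 hy))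
  linear_combination ((b-2)*(b+2))*hK

theorem stmt_18 (a b : ℂ) :
    (∃ p : Fin 5 → ℂ, p ≠ 0 ∧ ∀ i : Fin 5,
        deriv (fun t : ℂ => F11226 a b (Function.update p i t)) (p i) = 0) ↔
      (b - 2) * (b + 2) * (a ^ 6 - 1728 * b + 3456) * (a ^ 6 - 1728 * b - 3456) = 0 := by
  constructor
  · rintro ⟨p, hp, hd⟩
    have h1 := hd 0; rw [deriv0' a b p] at h1
    have h2 := hd 1; rw [deriv1' a b p] at h2
    have h3 := hd 2; rw [deriv2' a b p] at h3
    have h4 := hd 3; rw [deriv3' a b p] at h4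
    have h5 := hd 4; rw [deriv4' a b p] at h5
    refine key18 a b (p 0) (p 1) (p 2) (p 3) (p 4) h1 h2 h3 h4 h5 ?_
    rintro ⟨hx, hy, hz, hu, hv⟩
    apply hp
    funext i
    fin_cases i
    · exact hx
    · exact hy
    · exact hz
    · exact hu
    · exact hv
  · intro h
    obtain ⟨s, hs⟩ := IsAlgClosed.exists_pow_nat_eq ((1:ℂ)/12) (n := 2) (by norm_num)
    rcases mul_eq_zero.mp h with h' | hB
    · rcases mul_eq_zero.mp h' with h'' | hA
      · rcases mul_eq_zero.mp h'' with hb2 | hbm2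
        · -- b = 2
          obtain ⟨y, hy⟩ := IsAlgClosed.exists_pow_nat_eq (-1 : ℂ) (n := 6) (by norm_num)
          refine ⟨![1, y, 0, 0, 0], ?_, crit18 a b _ ?_ ?_ ?_ ?_ ?_⟩
          · intro hcon
            have := congrFun hcon 0
            simp at this
          all_goals simp only [Matrix.cons_val_zero, Matrix.cons_val_one, Matrix.head_cons,
            Matrix.cons_val_two, Matrix.tail_cons, Matrix.cons_val_three, Matrix.cons_val_four,
            Matrix.cons_val_fin_one]
          · linear_combination (-6)*hb2 + 6*b*hy
          · linear_combination 6*y^5*hb2 + 12*y^5*hy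
          · ring
          · ring
          · ring
        · -- b = -2
          refine ⟨![1, 1, 0, 0, 0], ?_, crit18 a b _ ?_ ?_ ?_ ?_ ?_⟩
          · intro hcon
            have := congrFun hcon 0
            simp at this
          all_goals simp only [Matrix.cons_val_zero, Matrix.cons_val_one, Matrix.head_cons,
            Matrix.cons_val_two, Matrix.tail_cons, Matrix.cons_val_three, Matrix.cons_val_four,
            Matrix.cons_val_fin_one]
          · linear_combination 6*hbm2
          · linear_combination 6*hbm2
          · ring
          · ring
          · ring
      · -- a^6 = 1728 b - 3456
        obtain ⟨y, hy⟩ := IsAlgClosed.exists_pow_nat_eq (-1 : ℂ) (n := 6) (by norm_num)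
        refine ⟨![1, y, a*y*s, a*y*s, -(a^3*y^3)/24], ?_, crit18 a b _ ?_ ?_ ?_ ?_ ?_⟩
        · intro hcon
          have := congrFun hcon 0
          simp at this
        all_goals simp only [Matrix.cons_val_zero, Matrix.cons_val_one, Matrix.head_cons,
          Matrix.cons_val_two, Matrix.tail_cons, Matrix.cons_val_three, Matrix.cons_val_four,
          Matrix.cons_val_fin_one]
        · linear_combination (-(a^6*y^6)/24)*hs + (6*b - a^6/288)*hy + (1/288)*hA
        · linear_combination (-(a^6*y^5)/24)*hs + 12*y^5*hy + (-(y^5)/288)*hA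
        · linear_combination (6*a^5*y^5*s*(s^2+1/12))*hs
        · linear_combination (6*a^5*y^5*s*(s^2+1/12))*hs
        · linear_combination (a^3*y^3)*hs
    · -- a^6 = 1728 b + 3456
      refine ⟨![1, 1, a*s, a*s, -(a^3)/24], ?_, crit18 a b _ ?_ ?_ ?_ ?_ ?_⟩
      · intro hcon
        have := congrFun hcon 0
        simp at this
      all_goals simp only [Matrix.cons_val_zero, Matrix.cons_val_one, Matrix.head_cons,
        Matrix.cons_val_two, Matrix.tail_cons, Matrix.cons_val_three, Matrix.cons_val_four,
        Matrix.cons_val_fin_one]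
      · linear_combination (-(a^6)/24)*hs + (-(1:ℂ)/288)*hB
      · linear_combination (-(a^6)/24)*hs + (-(1:ℂ)/288)*hB
      · linear_combination (6*a^5*s*(s^2+1/12))*hs
      · linear_combination (6*a^5*s*(s^2+1/12))*hs
      · linear_combination (a^3)*hs
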